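/- arXiv:1702.03094 — 4 statements merged into one kernel-verified Lean document; each statement's English description precedes it below -/
import Mathlib

section
/- Let η be a norm on ℝ^N and E a closed set with nonempty boundary. Then the signed distance d^η_E(x) := dist^η(x,E) − dist^η(x,E^c) is Lipschitz, and at every point x ∉ ∂E where d^η_E is differentiable, one has η°(∇d^η_E(x)) = 1. -/
open Set

/-- The `η`-distance from a set. -/
noncomputable def etaDist {N : ℕ} (η : EuclideanSpace ℝ (Fin N) → ℝ)
    (A : Set (EuclideanSpace ℝ (Fin N))) (x : EuclideanSpace ℝ (Fin N)) : ℝ :=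
  sInf {t | ∃ y ∈ A, t = η (x - y)}

/-- The `η`-signed distance from a set. -/
noncomputable def etaSignedDist {N : ℕ} (η : EuclideanSpace ℝ (Fin N) → ℝ)
    (A : Set (EuclideanSpace ℝ (Fin N))) (x : EuclideanSpace ℝ (Fin N)) : ℝ :=
  etaDist η A x - etaDist η Aᶜ x

/-!
The hypotheses make `η` a seminorm, which in finite dimension is continuous and, being positive
off `0`, coercive. An `η`-distance `d_A` is `1`-Lipschitz for `η`, so `⟪∇d_A x, w⟫ ≤ η w`. For
`x ∉ closure A` there is a nearest point `y ∈ closure A`, and `d_A` decreases at unit `η`-rate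
along the segment from `x` to `y`; hence `w = (x - y) / η (x - y)` attains the bound. Near a point
off `∂E` the signed distance is `d_E` (outside `E`) or `-d_{Eᶜ}` (in the interior of `E`), and the
unit `η`-ball is symmetric.
-/

open Filter Topology

section Seminorm

variable {V : Type*}

def seminormOfConvexOn [AddCommGroup V] [Module ℝ V] {η : V → ℝ} (hconv : ConvexOn ℝ univ η)
    (heven : ∀ x, η (-x) = η x) (hhom : ∀ c : ℝ, 0 ≤ c → ∀ x, η (c • x) = c * η x) :
    Seminorm ℝ V :=
  Seminorm.of η
    (fun a b => by
      have hmid := hconv.2 (mem_univ a) (mem_univ b) (by norm_num : (0 : ℝ) ≤ 1 / 2)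
        (by norm_num : (0 : ℝ) ≤ 1 / 2) (by norm_num)
      have hscale : a + b = (2 : ℝ) • ((1 / 2 : ℝ) • a + (1 / 2 : ℝ) • b) := by module
      rw [hscale, hhom 2 zero_le_two]
      simp only [smul_eq_mul] at hmid
      linarith)
    (fun c x => by
      rcases le_or_gt 0 c with hc | hc
      · rw [hhom c hc, Real.norm_of_nonneg hc]
      · rw [← neg_neg c, neg_smul, heven, hhom (-c) (by linarith), norm_neg,
          Real.norm_of_nonneg (by linarith)])

variable [NormedAddCommGroup V] [NormedSpace ℝ V] [FiniteDimensional ℝ V] (p : Seminorm ℝ V)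

theorem Seminorm.continuous_of_finiteDimensional : Continuous p :=
  p.convexOn.locallyLipschitz.continuous

theorem Seminorm.exists_pos_mul_norm_le (hp : ∀ x ≠ 0, 0 < p x) :
    ∃ m > 0, ∀ x, m * ‖x‖ ≤ p x := by
  obtain ⟨m, hm, hmS⟩ : ∃ m > 0, ∀ x ∈ Metric.sphere (0 : V) 1, m ≤ p x := by
    rcases (Metric.sphere (0 : V) 1).eq_empty_or_nonempty with hS | hS
    · exact ⟨1, one_pos, by simp [hS]⟩
    obtain ⟨x₀, hx₀, hmin⟩ := (isCompact_sphere (0 : V) 1).exists_isMinOn hS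
      p.continuous_of_finiteDimensional.continuousOn
    exact ⟨p x₀, hp x₀ (ne_zero_of_mem_unit_sphere ⟨x₀, hx₀⟩), hmin⟩
  refine ⟨m, hm, fun x => ?_⟩
  rcases eq_or_ne x 0 with rfl | hx
  · simp
  have hxn : ‖x‖ ≠ 0 := norm_ne_zero_iff.mpr hx
  calc m * ‖x‖ ≤ p (‖x‖⁻¹ • x) * ‖x‖ := by
        gcongr
        exact hmS _ (by simp [norm_smul, hxn])
    _ = p x := by
        rw [map_smul_eq_mul, norm_inv, norm_norm]
        field_simp

theorem Seminorm.tendsto_cocompact_atTop (hp : ∀ x ≠ 0, 0 < p x) :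
    Tendsto p (cocompact V) atTop := by
  obtain ⟨m, hm, hmp⟩ := p.exists_pos_mul_norm_le hp
  exact tendsto_atTop_mono hmp (tendsto_norm_cocompact_atTop.const_mul_atTop hm)

end Seminorm

section Gradient

variable {F : Type*} [NormedAddCommGroup F] [InnerProductSpace ℝ F]

theorem Seminorm.image_inner_neg_setOf_le_one (p : Seminorm ℝ F) (ξ : F) :
    (fun w => inner ℝ w (-ξ)) '' {w | p w ≤ 1} = (fun w => inner ℝ w ξ) '' {w | p w ≤ 1} := by
  have key : ∀ ζ : F, (fun w => inner ℝ w (-ζ)) '' {w | p w ≤ 1} ⊆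
      (fun w => inner ℝ w ζ) '' {w | p w ≤ 1} := by
    rintro ζ _ ⟨w, hw, rfl⟩
    exact ⟨-w, by simpa using hw, by simp [inner_neg_left, inner_neg_right]⟩
  exact (key ξ).antisymm (by simpa using key (-ξ))

variable [CompleteSpace F]

theorem inner_gradient_le_of_eventually_le {f : F → ℝ} {x v : F} {c : ℝ}
    (hf : DifferentiableAt ℝ f x) (h : ∀ᶠ t in 𝓝[>] (0 : ℝ), f (x + t • v) ≤ f x + t * c) :
    inner ℝ (gradient f x) v ≤ c := by
  have hline : HasDerivAt (fun t : ℝ => x + t • v) v 0 := by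
    simpa using ((hasDerivAt_id (0 : ℝ)).smul_const v).const_add x
  have hf' : HasFDerivAt f (fderiv ℝ f x) (x + (0 : ℝ) • v) := by
    simpa using hf.hasFDerivAt
  have hderiv : HasDerivAt (fun t : ℝ => f (x + t • v)) (fderiv ℝ f x v) 0 :=
    hf'.comp_hasDerivAt 0 hline
  rw [gradient, InnerProductSpace.toDual_symm_apply]
  have hslope := (hasDerivWithinAt_iff_tendsto_slope' (s := Ioi 0) (lt_irrefl 0)).mp
    hderiv.hasDerivWithinAt
  refine le_of_tendsto hslope ?_
  filter_upwards [h, self_mem_nhdsWithin] with t ht (htpos : 0 < t)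
  rw [slope_def_field, div_le_iff₀ (by simpa using htpos)]
  simp only [zero_smul, add_zero, sub_zero]
  linarith

end Gradient

section EtaDist

variable {N : ℕ} (p : Seminorm ℝ (EuclideanSpace ℝ (Fin N))) {A : Set (EuclideanSpace ℝ (Fin N))}

theorem etaDist_nonneg (A : Set (EuclideanSpace ℝ (Fin N))) (x : EuclideanSpace ℝ (Fin N)) :
    0 ≤ etaDist p A x :=
  Real.sInf_nonneg fun _ ⟨_, _, ht⟩ => ht ▸ apply_nonneg p _

theorem etaDist_le_of_mem {y : EuclideanSpace ℝ (Fin N)} (hy : y ∈ A)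
    (x : EuclideanSpace ℝ (Fin N)) : etaDist p A x ≤ p (x - y) :=
  csInf_le ⟨0, fun _ ⟨_, _, ht⟩ => ht ▸ apply_nonneg p _⟩ ⟨y, hy, rfl⟩

theorem etaDist_eq_zero_of_mem {x : EuclideanSpace ℝ (Fin N)} (hx : x ∈ A) : etaDist p A x = 0 :=
  le_antisymm (by simpa using etaDist_le_of_mem p hx x) (etaDist_nonneg p A x)

theorem etaDist_le_add (A : Set (EuclideanSpace ℝ (Fin N))) (x z : EuclideanSpace ℝ (Fin N)) :
    etaDist p A x ≤ etaDist p A z + p (x - z) := by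
  rcases A.eq_empty_or_nonempty with rfl | ⟨y₀, hy₀⟩
  · simp [etaDist]
  rw [← sub_le_iff_le_add]
  refine le_csInf ⟨_, y₀, hy₀, rfl⟩ fun _ ⟨y, hy, ht⟩ => ?_
  rw [ht, sub_le_iff_le_add]
  calc etaDist p A x ≤ p (x - y) := etaDist_le_of_mem p hy x
    _ ≤ p (z - y) + p (x - z) := by
        simpa [add_comm] using map_add_le_add p (x - z) (z - y)

theorem etaDist_le_of_mem_closure {y : EuclideanSpace ℝ (Fin N)} (hy : y ∈ closure A)
    (x : EuclideanSpace ℝ (Fin N)) : etaDist p A x ≤ p (x - y) :=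
  closure_minimal (fun _ hz => etaDist_le_of_mem p hz x)
    (isClosed_le continuous_const
      (p.continuous_of_finiteDimensional.comp (continuous_const.sub continuous_id))) hy

theorem exists_mem_closure_etaDist_eq (hp : ∀ x ≠ 0, 0 < p x) (hA : A.Nonempty)
    (x : EuclideanSpace ℝ (Fin N)) : ∃ y ∈ closure A, etaDist p A x = p (x - y) := by
  obtain ⟨y₀, hy₀⟩ := hA
  have hcont : Continuous fun y => p (x - y) :=
    p.continuous_of_finiteDimensional.comp (continuous_const.sub continuous_id)
  have hcoercive : Tendsto (fun y => p (x - y)) (cocompact _) atTop := by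
    simp_rw [map_sub_rev p x]
    exact (p.tendsto_cocompact_atTop hp).comp
      (Homeomorph.subRight x).isClosedEmbedding.tendsto_cocompact
  obtain ⟨y, hy, hmin⟩ := hcont.continuousOn.exists_isMinOn' isClosed_closure
    (subset_closure hy₀)
    ((hcoercive.eventually_ge_atTop (p (x - y₀))).filter_mono inf_le_left)
  refine ⟨y, hy, le_antisymm (etaDist_le_of_mem_closure p hy x) ?_⟩
  exact le_csInf ⟨_, y₀, hy₀, rfl⟩ fun _ ⟨z, hz, ht⟩ => ht ▸ hmin (subset_closure hz)

theorem etaSignedDist_lipschitzWith {C : ℝ} (hC : ∀ x, p x ≤ C * ‖x‖)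
    (A : Set (EuclideanSpace ℝ (Fin N))) :
    LipschitzWith (Real.toNNReal (2 * C)) (etaSignedDist p A) := by
  refine LipschitzWith.of_le_add_mul' _ fun x z => ?_
  have hA := etaDist_le_add p A x z
  have hAc := etaDist_le_add p Aᶜ z x
  rw [map_sub_rev] at hAc
  have hxz := hC (x - z)
  rw [← dist_eq_norm] at hxz
  unfold etaSignedDist
  linarith

theorem inner_gradient_etaDist_le {x : EuclideanSpace ℝ (Fin N)}
    (hd : DifferentiableAt ℝ (etaDist p A) x) (v : EuclideanSpace ℝ (Fin N)) :
    inner ℝ (gradient (etaDist p A) x) v ≤ p v := by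
  refine inner_gradient_le_of_eventually_le hd ?_
  filter_upwards [self_mem_nhdsWithin] with t (ht : 0 < t)
  simpa [map_smul_eq_mul, abs_of_pos ht] using etaDist_le_add p A (x + t • v) x

theorem isGreatest_inner_gradient_etaDist (hp : ∀ x ≠ 0, 0 < p x) (hA : A.Nonempty)
    {x : EuclideanSpace ℝ (Fin N)} (hx : x ∉ closure A)
    (hd : DifferentiableAt ℝ (etaDist p A) x) :
    IsGreatest ((fun w => inner ℝ w (gradient (etaDist p A) x)) '' {w | p w ≤ 1}) 1 := by
  obtain ⟨y, hy, hdist⟩ := exists_mem_closure_etaDist_eq p hp hA x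
  set d := p (x - y)
  have hd0 : 0 < d := hp _ (sub_ne_zero.mpr fun h => hx (h ▸ hy))
  have htoward : inner ℝ (gradient (etaDist p A) x) (y - x) ≤ -d := by
    refine inner_gradient_le_of_eventually_le hd ?_
    filter_upwards [Ioo_mem_nhdsGT (zero_lt_one' ℝ)] with t ⟨ht0, ht1⟩
    have hseg : x + t • (y - x) - y = (1 - t) • (x - y) := by module
    calc etaDist p A (x + t • (y - x)) ≤ p ((1 - t) • (x - y)) := by
          rw [← hseg]; exact etaDist_le_of_mem_closure p hy _
      _ = etaDist p A x + t * -d := by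
          rw [map_smul_eq_mul, Real.norm_of_nonneg (by linarith), hdist]; ring
  have hinner : inner ℝ (gradient (etaDist p A) x) (x - y) = d := by
    refine le_antisymm (inner_gradient_etaDist_le p hd _) ?_
    rw [← neg_sub, inner_neg_right] at htoward
    linarith
  refine ⟨⟨d⁻¹ • (x - y), ?_, ?_⟩, ?_⟩
  · simp [map_smul_eq_mul, abs_of_pos hd0, inv_mul_cancel₀ hd0.ne', d]
  · beta_reduce
    rw [real_inner_smul_left, real_inner_comm, hinner, inv_mul_cancel₀ hd0.ne']
  · rintro _ ⟨w, hw, rfl⟩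
    show inner ℝ w _ ≤ 1
    rw [real_inner_comm]
    exact (inner_gradient_etaDist_le p hd w).trans hw

theorem etaSignedDist_eventuallyEq_etaDist {x : EuclideanSpace ℝ (Fin N)} (hx : x ∉ closure A) :
    etaSignedDist p A =ᶠ[𝓝 x] etaDist p A := by
  filter_upwards [isClosed_closure.isOpen_compl.mem_nhds hx] with z hz
  rw [etaSignedDist, etaDist_eq_zero_of_mem p (A := Aᶜ) fun hzA => hz (subset_closure hzA),
    sub_zero]

theorem etaSignedDist_eventuallyEq_neg_etaDist_compl {x : EuclideanSpace ℝ (Fin N)}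
    (hx : x ∉ closure Aᶜ) : etaSignedDist p A =ᶠ[𝓝 x] fun z => -etaDist p Aᶜ z := by
  filter_upwards [isClosed_closure.isOpen_compl.mem_nhds hx] with z hz
  rw [etaSignedDist, etaDist_eq_zero_of_mem p (not_not.mp fun hzA => hz (subset_closure hzA)),
    zero_sub]

end EtaDist

/-- Let `η` be a norm on `ℝ^N` and `E` a closed set with nonempty boundary. Then
the signed distance `d^η_E` is Lipschitz, and at every point `x ∉ ∂E` where
`d^η_E` is differentiable one has `η°(∇d^η_E x) = 1`. -/
theorem signedDist_lipschitz_and_polar_gradient_eq_one {N : ℕ}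
    (η : EuclideanSpace ℝ (Fin N) → ℝ)
    (hconv : ConvexOn ℝ Set.univ η)
    (heven : ∀ x, η (-x) = η x)
    (hhom : ∀ (c : ℝ), 0 ≤ c → ∀ x, η (c • x) = c * η x)
    (hpos : ∀ x, x ≠ 0 → 0 < η x)
    (E : Set (EuclideanSpace ℝ (Fin N))) (hE : IsClosed E)
    (hfr : (frontier E).Nonempty) :
    (∃ K : NNReal, LipschitzWith K (etaSignedDist η E)) ∧
      ∀ x ∉ frontier E, DifferentiableAt ℝ (etaSignedDist η E) x →
        sSup ((fun w => (inner ℝ w (gradient (etaSignedDist η E) x) : ℝ)) '' {w | η w ≤ 1}) = 1 := by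
  obtain ⟨p, rfl⟩ : ∃ p : Seminorm ℝ _, ⇑p = η := ⟨seminormOfConvexOn hconv heven hhom, rfl⟩
  obtain ⟨C, -, hC⟩ := p.bound_of_continuous_normedSpace p.continuous_of_finiteDimensional
  refine ⟨⟨_, etaSignedDist_lipschitzWith p hC E⟩, fun x hx hd => IsGreatest.csSup_eq ?_⟩
  by_cases hxE : x ∈ E
  · have hxint : x ∉ closure Eᶜ := fun h => hx ⟨subset_closure hxE, by rwa [closure_compl] at h⟩
    have hEc : Eᶜ.Nonempty :=
      closure_nonempty_iff.mp ((frontier_compl E ▸ hfr).mono frontier_subset_closure)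
    have heq := etaSignedDist_eventuallyEq_neg_etaDist_compl p hxint
    have hdiff : DifferentiableAt ℝ (etaDist p Eᶜ) x := by
      simpa using (heq.differentiableAt_iff.mp hd).neg
    rw [heq.gradient_eq, show gradient (fun z => -etaDist p Eᶜ z) x = -gradient (etaDist p Eᶜ) x by
      simp [gradient], p.image_inner_neg_setOf_le_one]
    exact isGreatest_inner_gradient_etaDist p hpos hEc hxint hdiff
  · have hxcl : x ∉ closure E := by rwa [hE.closure_eq]
    have heq := etaSignedDist_eventuallyEq_etaDist p hxcl
    rw [heq.gradient_eq]
    exact isGreatest_inner_gradient_etaDist p hpos (hfr.mono hE.frontier_subset) hxcl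
      (heq.differentiableAt_iff.mp hd)
end

section
/- Let F ⊆ ℝ^N be a closed convex set and r > 0. Then for all ε ≥ 0, the Lebesgue measure of the set ((F)_ε \ F) ∩ B_r(0) is at most C(N) ε r^{N−1}, where (F)_ε = {x : dist(x,F) ≤ ε} is the (Euclidean) ε-neighborhood of F and C(N) depends only on the dimension N. -/
open Set MeasureTheory
open scoped RealInnerProductSpace ENNReal

lemma fubini_aux {n : ℕ} (j : Fin (n + 1)) (T : Set (EuclideanSpace ℝ (Fin (n + 1))))
    (hT : MeasurableSet T) (r δ : ℝ) (hδ : 0 ≤ δ) (hr : 0 ≤ r)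
    (hball : T ⊆ Metric.ball 0 r)
    (hslice : ∀ x y : EuclideanSpace ℝ (Fin (n + 1)), x ∈ T → y ∈ T →
      (∀ k, k ≠ j → x k = y k) → |x j - y j| ≤ δ) :
    volume T ≤ ENNReal.ofReal (2 * δ) * (ENNReal.ofReal (2 * r)) ^ n := by
  classical
  set e := (MeasurableEquiv.toLp 2 (Fin (n + 1) → ℝ)).symm with he
  set f := MeasurableEquiv.piFinSuccAbove (fun _ : Fin (n + 1) => ℝ) j with hf
  set S : Set (Fin (n + 1) → ℝ) := ⇑e.symm ⁻¹' T with hS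
  have hSmeas : MeasurableSet S := e.symm.measurable hT
  have hvolS : volume S = volume T :=
    ((EuclideanSpace.volume_preserving_symm_measurableEquiv_toLp (Fin (n + 1))).symm e).measure_preimage
      hT.nullMeasurableSet
  set A : Set (ℝ × (Fin n → ℝ)) := ⇑f.symm ⁻¹' S with hA
  have hAmeas : MeasurableSet A := f.symm.measurable hSmeas
  have hvolA : volume A = volume S :=
    ((volume_preserving_piFinSuccAbove (fun _ : Fin (n + 1) => ℝ) j).symm f).measure_preimage
      hSmeas.nullMeasurableSet
  -- membership description
  have hmem : ∀ (t : ℝ) (w : Fin n → ℝ), (t, w) ∈ A ↔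
      (e.symm (j.insertNth t w) : EuclideanSpace ℝ (Fin (n + 1))) ∈ T := by
    intro t w
    simp only [hA, hS, Set.mem_preimage, hf, MeasurableEquiv.piFinSuccAbove_symm_apply]
    exact Iff.rfl
  have key : volume A ≤ ENNReal.ofReal (2 * δ) * (ENNReal.ofReal (2 * r)) ^ n := by
    rw [show (volume : Measure (ℝ × (Fin n → ℝ))) = (volume : Measure ℝ).prod volume from rfl,
      Measure.prod_apply_symm hAmeas]
    have hbox : MeasurableSet (Set.pi univ fun _ : Fin n => Icc (-r) r) :=
      MeasurableSet.univ_pi fun _ => measurableSet_Icc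
    calc ∫⁻ w, volume ((fun t => (t, w)) ⁻¹' A) ∂volume
        ≤ ∫⁻ w, (Set.pi univ fun _ : Fin n => Icc (-r) r).indicator
            (fun _ => ENNReal.ofReal (2 * δ)) w ∂volume := by
          apply lintegral_mono
          intro w
          rcases eq_empty_or_nonempty ((fun t => (t, w)) ⁻¹' A) with hemp | ⟨t₀, ht₀⟩
          · simp [hemp]
          · have ht₀' := (hmem t₀ w).1 ht₀
            set x₀ : EuclideanSpace ℝ (Fin (n + 1)) := e.symm (j.insertNth t₀ w) with hx₀
            -- each coordinate of a point of T is < r in absolute value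
            have coordlt : ∀ (x : EuclideanSpace ℝ (Fin (n + 1))), x ∈ T → ∀ k, |x k| ≤ r := by
              intro x hx k
              have hn : ‖x‖ < r := by
                have := hball hx
                simpa [mem_ball_zero_iff] using this
              have : |x k| ≤ ‖x‖ := by
                rw [EuclideanSpace.norm_eq]
                have h1 : |x k| = Real.sqrt (|x k| ^ 2) := by
                  rw [Real.sqrt_sq_eq_abs, abs_abs]
                rw [h1]
                apply Real.sqrt_le_sqrt
                have : |x k| ^ 2 = ‖x k‖ ^ 2 := by rw [Real.norm_eq_abs]
                rw [this]
                exact Finset.single_le_sum (f := fun i => ‖x i‖ ^ 2)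
                  (fun i _ => sq_nonneg _) (Finset.mem_univ k)
              linarith
            have hw : w ∈ Set.pi univ fun _ : Fin n => Icc (-r) r := by
              intro k _
              have : |x₀ (j.succAbove k)| ≤ r := coordlt x₀ ht₀' _
              have hx0c : x₀ (j.succAbove k) = w k :=
                Fin.insertNth_apply_succAbove (α := fun _ : Fin (n+1) => ℝ) j t₀ w k
              rw [hx0c] at this
              constructor <;> [linarith [abs_le.1 this]; linarith [(abs_le.1 this).2]]
            rw [Set.indicator_of_mem hw]
            -- the slice is inside Icc (t₀ - δ) (t₀ + δ)
            have hsub : (fun t => (t, w)) ⁻¹' A ⊆ Icc (t₀ - δ) (t₀ + δ) := by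
              intro t ht
              have ht' := (hmem t w).1 ht
              set x : EuclideanSpace ℝ (Fin (n + 1)) := e.symm (j.insertNth t w) with hx
              have hagree : ∀ k, k ≠ j → x k = x₀ k := by
                intro k hk
                obtain ⟨k', hk'⟩ := Fin.exists_succAbove_eq hk
                rw [← hk']
                show (Fin.insertNth (α := fun _ : Fin (n+1) => ℝ) j t w) (j.succAbove k') = (Fin.insertNth (α := fun _ : Fin (n+1) => ℝ) j t₀ w) (j.succAbove k')
                rw [Fin.insertNth_apply_succAbove (α := fun _ : Fin (n+1) => ℝ), Fin.insertNth_apply_succAbove (α := fun _ : Fin (n+1) => ℝ)]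
              have hdiff := hslice x x₀ ht' ht₀' hagree
              have hxj : x j = t := Fin.insertNth_apply_same (α := fun _ : Fin (n+1) => ℝ) j t w
              have hx₀j : x₀ j = t₀ := Fin.insertNth_apply_same (α := fun _ : Fin (n+1) => ℝ) j t₀ w
              rw [hxj, hx₀j] at hdiff
              have := abs_le.1 hdiff
              constructor <;> linarith [this.1, this.2]
            calc volume ((fun t => (t, w)) ⁻¹' A) ≤ volume (Icc (t₀ - δ) (t₀ + δ)) :=
                measure_mono hsub
              _ = ENNReal.ofReal (2 * δ) := by rw [Real.volume_Icc]; ring_nf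
      _ = ENNReal.ofReal (2 * δ) * volume (Set.pi univ fun _ : Fin n => Icc (-r) r) := by
          rw [lintegral_indicator hbox]
          simp [Measure.restrict_apply MeasurableSet.univ]
      _ = ENNReal.ofReal (2 * δ) * (ENNReal.ofReal (2 * r)) ^ n := by
          rw [volume_pi_pi]
          simp only [Real.volume_Icc, sub_neg_eq_add, Finset.prod_const, Finset.card_univ,
            Fintype.card_fin]
          congr 2
          · ring
  rw [← hvolS, ← hvolA]
  exact key


set_option maxHeartbeats 2000000 in
/-- Let `F ⊆ ℝ^N` be a closed convex (nonempty) set and `r > 0`. Then for all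
`ε ≥ 0`, the Lebesgue measure of `((F)_ε \ F) ∩ B_r 0` is at most
`C(N) * ε * r^(N-1)`, with `C(N)` depending only on the dimension. -/
theorem convex_neighborhood_volume_bound (N : ℕ) (hN : 1 ≤ N) :
    ∃ C : ℝ, 0 < C ∧
      ∀ F : Set (EuclideanSpace ℝ (Fin N)), IsClosed F → Convex ℝ F → F.Nonempty →
        ∀ r : ℝ, 0 < r → ∀ ε : ℝ, 0 ≤ ε →
          volume (({x | Metric.infDist x F ≤ ε} \ F) ∩ Metric.ball (0 : EuclideanSpace ℝ (Fin N)) r)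
            ≤ ENNReal.ofReal (C * ε * r ^ (N - 1)) := by
  classical
  obtain ⟨n, rfl⟩ : ∃ n, N = n + 1 := ⟨N - 1, by omega⟩
  set Nr : ℝ := ((n : ℝ) + 1) with hNr
  have hNrpos : (0:ℝ) < Nr := by positivity
  set c : ℝ := Real.sqrt Nr with hc
  have hcpos : 0 < c := Real.sqrt_pos.2 hNrpos
  refine ⟨2 * Nr * c * 2 ^ (n + 1), by positivity, ?_⟩
  intro F hFclosed hFconv hFne r hr ε hε
  haveI : Nonempty F := hFne.to_subtype
  set d : EuclideanSpace ℝ (Fin (n + 1)) → ℝ := fun x => Metric.infDist x F with hd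
  choose P hPmem hPnorm using
    exists_norm_eq_iInf_of_complete_convex hFne hFclosed.isComplete hFconv
  have hvar : ∀ x, ∀ w ∈ F, ⟪x - P x, w - P x⟫ ≤ 0 := fun x =>
    (norm_eq_iInf_iff_real_inner_le_zero hFconv (hPmem x)).1 (hPnorm x)
  have hdist : ∀ x, ‖x - P x‖ = d x := by
    intro x
    rw [hPnorm x]
    show _ = Metric.infDist x F
    rw [Metric.infDist_eq_iInf]
    simp_rw [dist_eq_norm]
  -- Lipschitz continuity of P
  have hlip : ∀ x y, ‖P x - P y‖ ≤ ‖x - y‖ := by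
    intro x y
    have h1 := hvar x (P y) (hPmem y)
    have h2 := hvar y (P x) (hPmem x)
    have key : ‖P x - P y‖ ^ 2 ≤ ⟪x - y, P x - P y⟫ := by
      have e1 : ⟪x - P x, P y - P x⟫ + ⟪y - P y, P x - P y⟫
          = ⟪x - y, P y - P x⟫ + ‖P x - P y‖ ^ 2 := by
        rw [← real_inner_self_eq_norm_sq]
        simp only [inner_sub_left, inner_sub_right]
        ring
      have e2 : ⟪x - y, P y - P x⟫ = - ⟪x - y, P x - P y⟫ := by
        rw [← inner_neg_right]; congr 1; abel
      nlinarith [e1, e2, h1, h2]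
    have h3 := real_inner_le_norm (x - y) (P x - P y)
    nlinarith [norm_nonneg (P x - P y), norm_nonneg (x - y), sq_nonneg (‖P x - P y‖ - ‖x - y‖)]
  have hPcont : Continuous P := by
    rw [Metric.continuous_iff]
    intro x δ hδ
    refine ⟨δ, hδ, fun y hy => lt_of_le_of_lt ?_ hy⟩
    rw [dist_eq_norm, dist_eq_norm]
    exact hlip y x
  have hdcont : Continuous d := Metric.continuous_infDist_pt F
  -- lower bound on distance via supporting halfspace at P x
  have hlow : ∀ x y, 0 < d x → ⟪y - P x, x - P x⟫ ≤ d y * d x := by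
    intro x y hdx
    have : ⟪y - P x, x - P x⟫ / d x ≤ d y := by
      show _ ≤ Metric.infDist y F
      rw [Metric.infDist_eq_iInf]
      refine le_ciInf fun w => ?_
      rw [div_le_iff₀ hdx]
      have hw : ⟪(w : EuclideanSpace ℝ (Fin (n+1))) - P x, x - P x⟫ ≤ 0 := by
        have := hvar x w w.2
        rwa [real_inner_comm] at this
      have split : ⟪y - P x, x - P x⟫
          = ⟪y - (w : EuclideanSpace ℝ (Fin (n+1))), x - P x⟫
            + ⟪(w : EuclideanSpace ℝ (Fin (n+1))) - P x, x - P x⟫ := by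
        rw [← inner_add_left]; congr 1; abel
      have hub : ⟪y - (w : EuclideanSpace ℝ (Fin (n+1))), x - P x⟫
          ≤ dist y (w : EuclideanSpace ℝ (Fin (n+1))) * d x := by
        calc ⟪y - (w : EuclideanSpace ℝ (Fin (n+1))), x - P x⟫
            ≤ ‖y - (w : EuclideanSpace ℝ (Fin (n+1)))‖ * ‖x - P x‖ := real_inner_le_norm _ _
          _ = dist y (w : EuclideanSpace ℝ (Fin (n+1))) * d x := by
              rw [dist_eq_norm, hdist]
      linarith
    calc ⟪y - P x, x - P x⟫ = ⟪y - P x, x - P x⟫ / d x * d x := by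
          field_simp
      _ ≤ d y * d x := mul_le_mul_of_nonneg_right this hdx.le
  -- the pieces
  set sgn : Bool → ℝ := fun b => if b then 1 else -1 with hsgn
  have hsgn_sq : ∀ b, sgn b * sgn b = 1 := by intro b; cases b <;> simp [hsgn]
  have hsgn_abs : ∀ b (t : ℝ), |sgn b * t| = |t| := by
    intro b t; cases b <;> simp [hsgn]
  set T : Fin (n + 1) × Bool → Set (EuclideanSpace ℝ (Fin (n + 1))) := fun p =>
    {x | 0 < d x ∧ d x ≤ ε ∧ d x ≤ c * (sgn p.2 * (x p.1 - P x p.1))}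
      ∩ Metric.ball 0 r with hT
  have hcoord : ∀ j : Fin (n + 1),
      Continuous fun x : EuclideanSpace ℝ (Fin (n + 1)) => x j := by
    intro j
    exact (EuclideanSpace.proj (𝕜 := ℝ) j).continuous
  have hTmeas : ∀ p, MeasurableSet (T p) := by
    intro p
    apply MeasurableSet.inter _ measurableSet_ball
    have e1 : {x : EuclideanSpace ℝ (Fin (n+1)) |
        0 < d x ∧ d x ≤ ε ∧ d x ≤ c * (sgn p.2 * (x p.1 - P x p.1))} =
        {x | 0 < d x} ∩ ({x | d x ≤ ε} ∩
          {x | d x ≤ c * (sgn p.2 * (x p.1 - P x p.1))}) := by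
      ext x; simp [Set.mem_inter_iff, and_assoc]
    rw [e1]
    refine (measurableSet_lt measurable_const hdcont.measurable).inter
      ((measurableSet_le hdcont.measurable measurable_const).inter
        (measurableSet_le hdcont.measurable ?_))
    exact (continuous_const.mul ((continuous_const.mul
      ((hcoord p.1).sub ((hcoord p.1).comp hPcont))))).measurable
  -- key geometric slice estimate
  have step : ∀ (j : Fin (n + 1)) (b : Bool) (x y : EuclideanSpace ℝ (Fin (n + 1))),
      x ∈ T (j, b) → y ∈ T (j, b) → (∀ k, k ≠ j → x k = y k) →
      0 ≤ sgn b * (y j - x j) → sgn b * (y j - x j) ≤ c * ε := by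
    intro j b x y hx hy hagree ha
    obtain ⟨⟨hdx0, hdxε, hthr⟩, -⟩ := hx
    obtain ⟨⟨hdy0, hdyε, -⟩, -⟩ := hy
    have h1 := hlow x y hdx0
    -- expand the inner product
    have e0 : y - P x = (x - P x) + (y - x) := by abel
    have e1 : ⟪y - P x, x - P x⟫ = ⟪x - P x, x - P x⟫ + ⟪y - x, x - P x⟫ := by
      rw [e0, inner_add_left]
    have e2 : ⟪x - P x, x - P x⟫ = d x ^ 2 := by
      rw [real_inner_self_eq_norm_sq, hdist]
    have e3 : ⟪y - x, x - P x⟫ = (y j - x j) * (x j - P x j) := by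
      rw [PiLp.inner_apply]
      rw [Finset.sum_eq_single j]
      · simp [RCLike.inner_apply, PiLp.sub_apply]; ring
      · intro k _ hk
        have : x k = y k := hagree k hk
        simp [RCLike.inner_apply, PiLp.sub_apply, this]
      · simp
    have h2 : d x ^ 2 + (y j - x j) * (x j - P x j) ≤ d y * d x := by
      rw [← e2]; nlinarith [e1, e3, h1]
    have e4 : (y j - x j) * (x j - P x j)
        = (sgn b * (y j - x j)) * (sgn b * (x j - P x j)) := by
      calc (y j - x j) * (x j - P x j)
          = (sgn b * sgn b) * ((y j - x j) * (x j - P x j)) := by rw [hsgn_sq b]; ring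
        _ = (sgn b * (y j - x j)) * (sgn b * (x j - P x j)) := by ring
    set a := sgn b * (y j - x j) with hA
    set t := sgn b * (x j - P x j) with hB
    rw [e4] at h2
    -- now: d x ^ 2 + a * t ≤ d y * d x, d x ≤ c * t, 0 ≤ a, d y ≤ ε, 0 < d x
    have hdy_le : d y * d x ≤ ε * d x := mul_le_mul_of_nonneg_right hdyε hdx0.le
    have hat : a * d x ≤ a * (c * t) := mul_le_mul_of_nonneg_left hthr ha
    nlinarith [sq_nonneg (d x), mul_pos hdx0 hdx0, hcpos, h2, hat, hdy_le,
      mul_nonneg ha hdx0.le]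
  have key : ∀ (j : Fin (n + 1)) (b : Bool) (x y : EuclideanSpace ℝ (Fin (n + 1))),
      x ∈ T (j, b) → y ∈ T (j, b) → (∀ k, k ≠ j → x k = y k) →
      |x j - y j| ≤ c * ε := by
    intro j b x y hx hy hagree
    rcases le_total 0 (sgn b * (y j - x j)) with h | h
    · have := step j b x y hx hy hagree h
      calc |x j - y j| = |sgn b * (y j - x j)| := by rw [hsgn_abs, abs_sub_comm]
        _ = sgn b * (y j - x j) := abs_of_nonneg h
        _ ≤ c * ε := this
    · have h' : 0 ≤ sgn b * (x j - y j) := by nlinarith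
      have := step j b y x hy hx (fun k hk => (hagree k hk).symm) h'
      calc |x j - y j| = |sgn b * (x j - y j)| := by rw [hsgn_abs]
        _ = sgn b * (x j - y j) := abs_of_nonneg h'
        _ ≤ c * ε := this
  -- each piece has small measure via Fubini
  have piece : ∀ p, volume (T p) ≤
      ENNReal.ofReal (2 * (c * ε)) * (ENNReal.ofReal (2 * r)) ^ n := by
    intro p
    refine fubini_aux p.1 (T p) (hTmeas p) r (c * ε) (by positivity) hr.le
      inter_subset_right ?_
    intro x y hx hy hagree
    exact key p.1 p.2 x y (by rcases p with ⟨j, b⟩; exact hx) (by rcases p with ⟨j, b⟩; exact hy)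
      hagree
  -- covering
  have hcover : ({x | Metric.infDist x F ≤ ε} \ F) ∩ Metric.ball 0 r ⊆ ⋃ p, T p := by
    rintro x ⟨⟨hxd, hxF⟩, hxball⟩
    have hdx0 : 0 < d x := by
      rcases lt_or_eq_of_le (Metric.infDist_nonneg : 0 ≤ d x) with h | h
      · exact h
      · exfalso
        apply hxF
        have : x ∈ closure F := (Metric.mem_closure_iff_infDist_zero hFne).2 h.symm
        rwa [hFclosed.closure_eq] at this
    -- find a coordinate carrying a big share of the norm
    have hsum : ∑ k, ((x - P x) k) ^ 2 = d x ^ 2 := by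
      have h1 := EuclideanSpace.norm_eq (x - P x)
      rw [hdist] at h1
      have h2 : d x ^ 2 = (Real.sqrt (∑ i, ‖(x - P x) i‖ ^ 2)) ^ 2 := by rw [h1]
      rw [Real.sq_sqrt (by positivity)] at h2
      rw [h2]
      congr 1
      ext k
      rw [Real.norm_eq_abs, sq_abs]
    have hexists : ∃ k, d x ^ 2 ≤ Nr * ((x - P x) k) ^ 2 := by
      by_contra hcon
      push_neg at hcon
      have hlt : ∀ k : Fin (n + 1), ((x - P x) k) ^ 2 < d x ^ 2 / Nr := by
        intro k
        rw [lt_div_iff₀ hNrpos]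
        nlinarith [hcon k]
      have : ∑ k, ((x - P x) k) ^ 2 < ∑ _k : Fin (n + 1), d x ^ 2 / Nr :=
        Finset.sum_lt_sum_of_nonempty Finset.univ_nonempty fun k _ => hlt k
      rw [Finset.sum_const, Finset.card_univ, Fintype.card_fin, nsmul_eq_mul] at this
      have hNr' : ((n + 1 : ℕ) : ℝ) = Nr := by push_cast [hNr]; ring
      rw [hNr', mul_div_cancel₀ _ (ne_of_gt hNrpos)] at this
      rw [hsum] at this
      exact lt_irrefl _ this
    obtain ⟨k, hk⟩ := hexists
    have hdk : d x ≤ c * |(x - P x) k| := by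
      have h1 : d x = Real.sqrt (d x ^ 2) := (Real.sqrt_sq hdx0.le).symm
      rw [h1, hc]
      calc Real.sqrt (d x ^ 2) ≤ Real.sqrt (Nr * ((x - P x) k) ^ 2) := Real.sqrt_le_sqrt hk
        _ = Real.sqrt Nr * |(x - P x) k| := by
            rw [Real.sqrt_mul hNrpos.le, Real.sqrt_sq_eq_abs]
    set b : Bool := decide (0 ≤ (x - P x) k) with hb
    have habs : sgn b * (x k - P x k) = |(x - P x) k| := by
      have hxk : (x - P x) k = x k - P x k := by simp [PiLp.sub_apply]
      rcases le_or_gt 0 ((x - P x) k) with h | h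
      · have : b = true := by rw [hb, decide_eq_true_eq]; exact h
        rw [this, ← hxk, abs_of_nonneg h]; simp [hsgn]
      · have : b = false := by rw [hb, decide_eq_false_iff_not]; exact not_le.2 h
        rw [this, ← hxk, abs_of_neg h]; simp [hsgn]
    refine Set.mem_iUnion.2 ⟨(k, b), ⟨⟨hdx0, hxd, ?_⟩, hxball⟩⟩
    rw [habs]
    exact hdk
  -- put everything together
  have hN1 : n + 1 - 1 = n := by omega
  calc volume (({x | Metric.infDist x F ≤ ε} \ F) ∩ Metric.ball
        (0 : EuclideanSpace ℝ (Fin (n+1))) r)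
      ≤ volume (⋃ p, T p) := measure_mono hcover
    _ ≤ ∑ p : Fin (n + 1) × Bool, volume (T p) := measure_iUnion_fintype_le _ _
    _ ≤ ∑ _p : Fin (n + 1) × Bool,
          ENNReal.ofReal (2 * (c * ε)) * (ENNReal.ofReal (2 * r)) ^ n :=
        Finset.sum_le_sum fun p _ => piece p
    _ = ((n + 1) * 2 : ℕ) * (ENNReal.ofReal (2 * (c * ε)) * (ENNReal.ofReal (2 * r)) ^ n) := by
        rw [Finset.sum_const, Finset.card_univ, Fintype.card_prod, Fintype.card_fin,
          Fintype.card_bool, nsmul_eq_mul]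
    _ ≤ ENNReal.ofReal (2 * Nr * c * 2 ^ (n + 1) * ε * r ^ (n + 1 - 1)) := by
        rw [← ENNReal.ofReal_pow (by linarith : (0:ℝ) ≤ 2 * r),
          ← ENNReal.ofReal_mul (by positivity : (0:ℝ) ≤ 2 * (c * ε))]
        rw [show (((n + 1) * 2 : ℕ) : ℝ≥0∞) = ENNReal.ofReal (((n+1) * 2 : ℕ) : ℝ) from
          (ENNReal.ofReal_natCast _).symm]
        rw [← ENNReal.ofReal_mul (by positivity)]
        apply ENNReal.ofReal_le_ofReal
        rw [hN1]
        have : (((n + 1) * 2 : ℕ) : ℝ) = 2 * Nr := by push_cast [hNr]; ring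
        rw [this, mul_pow]
        rw [hNr]
        ring_nf
        apply le_of_eq
        ring
end

section
/- Let ψ and φ be norms on ℝ^N. Then ψ is φ-regular with parameter ε₀ > 0 (i.e., the unit ball W^ψ of ψ° satisfies a uniform interior condition by translates of ε₀·W^φ, where W^φ is the unit ball of φ°) if and only if there exists a nonnegative, convex, one-homogeneous function ψ₀ with ψ = ψ₀ + ε₀ φ. -/
open Set
open scoped RealInnerProductSpace

namespace PhiReg

variable {N : ℕ}

/-- A function with all the axioms of a norm (stated as in the theorem). -/
structure NormLike (n : EuclideanSpace ℝ (Fin N) → ℝ) : Prop where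
  conv : ConvexOn ℝ Set.univ n
  even : ∀ x, n (-x) = n x
  hom : ∀ c : ℝ, 0 ≤ c → ∀ x, n (c • x) = c * n x
  pos : ∀ x, x ≠ 0 → 0 < n x

theorem subadd_of_convexOn_hom {f : EuclideanSpace ℝ (Fin N) → ℝ}
    (hconv : ConvexOn ℝ Set.univ f)
    (hhom : ∀ c : ℝ, 0 ≤ c → ∀ x, f (c • x) = c * f x)
    (x y : EuclideanSpace ℝ (Fin N)) : f (x + y) ≤ f x + f y := by
  have hmid := hconv.2 (mem_univ x) (mem_univ y) (by norm_num : (0:ℝ) ≤ 1/2)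
    (by norm_num : (0:ℝ) ≤ 1/2) (by norm_num)
  have hxy : x + y = (2:ℝ) • ((1/2 : ℝ) • x + (1/2 : ℝ) • y) := by
    rw [smul_add, smul_smul, smul_smul]; norm_num
  rw [hxy, hhom 2 (by norm_num)]
  simp only [smul_eq_mul] at hmid
  linarith

namespace NormLike

variable {n : EuclideanSpace ℝ (Fin N) → ℝ} (h : NormLike n)
include h

theorem zero : n 0 = 0 := by
  have := h.hom 0 le_rfl 0
  simpa using this

theorem nonneg (x : EuclideanSpace ℝ (Fin N)) : 0 ≤ n x := by
  rcases eq_or_ne x 0 with rfl | hx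
  · simp [h.zero]
  · exact (h.pos x hx).le

theorem subadd (x y : EuclideanSpace ℝ (Fin N)) : n (x + y) ≤ n x + n y :=
  PhiReg.subadd_of_convexOn_hom h.conv h.hom x y

theorem cont : Continuous n := by
  rw [← continuousOn_univ]
  exact h.conv.continuousOn isOpen_univ

theorem lower : ∃ c : ℝ, 0 < c ∧ ∀ x, c * ‖x‖ ≤ n x := by
  rcases isEmpty_or_nonempty (Fin N) with hN | hN
  · refine ⟨1, one_pos, fun x => ?_⟩
    have hx : x = 0 := PiLp.ext fun i => isEmptyElim i
    simp [hx, h.zero]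
  · obtain ⟨i⟩ := hN
    have hu : (EuclideanSpace.single i (1:ℝ)) ∈ Metric.sphere (0 : EuclideanSpace ℝ (Fin N)) 1 := by
      simp [EuclideanSpace.norm_single]
    obtain ⟨z, hz, hmin⟩ := (isCompact_sphere (0 : EuclideanSpace ℝ (Fin N)) 1).exists_isMinOn
      ⟨EuclideanSpace.single i (1:ℝ), hu⟩ h.cont.continuousOn
    have hz1 : ‖z‖ = 1 := by simpa using hz
    have hzne : z ≠ 0 := by
      intro hz0; rw [hz0] at hz1; simp at hz1
    refine ⟨n z, h.pos z hzne, fun x => ?_⟩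
    rcases eq_or_ne x 0 with rfl | hx
    · simp [h.zero]
    · have hnx : ‖x‖ ≠ 0 := norm_ne_zero_iff.mpr hx
      have hunit : (‖x‖⁻¹ • x) ∈ Metric.sphere (0 : EuclideanSpace ℝ (Fin N)) 1 := by
        simp [norm_smul, abs_of_nonneg (inv_nonneg.mpr (norm_nonneg x)), inv_mul_cancel₀ hnx]
      have hxx : x = ‖x‖ • (‖x‖⁻¹ • x) := by
        rw [smul_smul, mul_inv_cancel₀ hnx, one_smul]
      calc n z * ‖x‖ ≤ n (‖x‖⁻¹ • x) * ‖x‖ :=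
            mul_le_mul_of_nonneg_right (hmin hunit) (norm_nonneg x)
        _ = n x := by
            rw [mul_comm, ← h.hom _ (norm_nonneg x), ← hxx]

theorem isCompact_ball (r : ℝ) : IsCompact {x : EuclideanSpace ℝ (Fin N) | n x ≤ r} := by
  obtain ⟨c, hc, hlow⟩ := h.lower
  have hclosed : IsClosed {x : EuclideanSpace ℝ (Fin N) | n x ≤ r} :=
    isClosed_le h.cont continuous_const
  refine (isCompact_closedBall (0 : EuclideanSpace ℝ (Fin N)) (c⁻¹ * r)).of_isClosed_subset
    hclosed ?_
  intro x hx
  simp only [Metric.mem_closedBall, dist_zero_right]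
  have h1 : c * ‖x‖ ≤ r := le_trans (hlow x) hx
  calc ‖x‖ = c⁻¹ * (c * ‖x‖) := by field_simp
    _ ≤ c⁻¹ * r := mul_le_mul_of_nonneg_left h1 (inv_nonneg.mpr hc.le)

theorem convex_ball (r : ℝ) : Convex ℝ {x : EuclideanSpace ℝ (Fin N) | n x ≤ r} := by
  intro x hx y hy a b ha hb hab
  simp only [mem_setOf_eq] at *
  calc n (a • x + b • y) ≤ n (a • x) + n (b • y) := h.subadd _ _
    _ = a * n x + b * n y := by rw [h.hom a ha, h.hom b hb]
    _ ≤ a * r + b * r := add_le_add (mul_le_mul_of_nonneg_left hx ha)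
        (mul_le_mul_of_nonneg_left hy hb)
    _ = r := by rw [← add_mul, hab, one_mul]

end NormLike

/-- helper: convexity from subadditivity and positive homogeneity. -/
theorem convexOn_of_hom_subadd {f : EuclideanSpace ℝ (Fin N) → ℝ}
    (hhom : ∀ c : ℝ, 0 ≤ c → ∀ x, f (c • x) = c * f x)
    (hsub : ∀ x y, f (x + y) ≤ f x + f y) : ConvexOn ℝ Set.univ f := by
  refine ⟨convex_univ, fun x _ y _ a b ha hb hab => ?_⟩
  calc f (a • x + b • y) ≤ f (a • x) + f (b • y) := hsub _ _
    _ = a * f x + b * f y := by rw [hhom a ha, hhom b hb]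
    _ = a • f x + b • f y := rfl


/-! ### Support functions of bounded sets -/

/-- Support function of a set. -/
noncomputable def suppF (S : Set (EuclideanSpace ℝ (Fin N))) (x : EuclideanSpace ℝ (Fin N)) : ℝ :=
  sSup ((fun w => (inner ℝ w x : ℝ)) '' S)

section suppF

variable {S : Set (EuclideanSpace ℝ (Fin N))} {R : ℝ}

theorem suppF_bddAbove (hbd : ∀ w ∈ S, ‖w‖ ≤ R) (x : EuclideanSpace ℝ (Fin N)) :
    BddAbove ((fun w => (inner ℝ w x : ℝ)) '' S) := by
  refine ⟨R * ‖x‖, ?_⟩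
  rintro _ ⟨w, hw, rfl⟩
  calc (inner ℝ w x : ℝ) ≤ ‖w‖ * ‖x‖ := real_inner_le_norm w x
    _ ≤ R * ‖x‖ := mul_le_mul_of_nonneg_right (hbd w hw) (norm_nonneg x)

theorem suppF_le (hne : S.Nonempty) {x : EuclideanSpace ℝ (Fin N)} {a : ℝ}
    (H : ∀ w ∈ S, (inner ℝ w x : ℝ) ≤ a) : suppF S x ≤ a := by
  refine csSup_le (hne.image _) ?_
  rintro _ ⟨w, hw, rfl⟩
  exact H w hw

theorem le_suppF (hbd : ∀ w ∈ S, ‖w‖ ≤ R) {x w : EuclideanSpace ℝ (Fin N)} (hw : w ∈ S) :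
    (inner ℝ w x : ℝ) ≤ suppF S x :=
  le_csSup (suppF_bddAbove hbd x) (mem_image_of_mem _ hw)

theorem suppF_nonneg (hbd : ∀ w ∈ S, ‖w‖ ≤ R) (h0 : (0 : EuclideanSpace ℝ (Fin N)) ∈ S)
    (x : EuclideanSpace ℝ (Fin N)) : 0 ≤ suppF S x := by
  simpa using le_suppF hbd h0 (x := x)

theorem suppF_add (hne : S.Nonempty) (hbd : ∀ w ∈ S, ‖w‖ ≤ R)
    (x y : EuclideanSpace ℝ (Fin N)) : suppF S (x + y) ≤ suppF S x + suppF S y := by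
  refine suppF_le hne fun w hw => ?_
  rw [inner_add_right]
  exact add_le_add (le_suppF hbd hw) (le_suppF hbd hw)

theorem suppF_zero_pt (hne : S.Nonempty) (hbd : ∀ w ∈ S, ‖w‖ ≤ R)
    (h0 : (0 : EuclideanSpace ℝ (Fin N)) ∈ S) : suppF S 0 = 0 := by
  refine le_antisymm (suppF_le hne fun w hw => by simp) (suppF_nonneg hbd h0 0)

theorem suppF_smul (hne : S.Nonempty) (hbd : ∀ w ∈ S, ‖w‖ ≤ R)
    (h0 : (0 : EuclideanSpace ℝ (Fin N)) ∈ S)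
    {c : ℝ} (hc : 0 ≤ c) (x : EuclideanSpace ℝ (Fin N)) :
    suppF S (c • x) = c * suppF S x := by
  rcases eq_or_lt_of_le hc with rfl | hc
  · simp [suppF_zero_pt hne hbd h0]
  · refine le_antisymm ?_ ?_
    · refine suppF_le hne fun w hw => ?_
      rw [real_inner_smul_right]
      exact mul_le_mul_of_nonneg_left (le_suppF hbd hw) hc.le
    · have h1 : suppF S x ≤ c⁻¹ * suppF S (c • x) := by
        refine suppF_le hne fun w hw => ?_
        have h2 : (inner ℝ w (c • x) : ℝ) ≤ suppF S (c • x) := le_suppF hbd hw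
        rw [real_inner_smul_right] at h2
        calc (inner ℝ w x : ℝ) = c⁻¹ * (c * (inner ℝ w x : ℝ)) := by field_simp
          _ ≤ c⁻¹ * suppF S (c • x) :=
            mul_le_mul_of_nonneg_left h2 (inv_nonneg.mpr hc.le)
      calc c * suppF S x ≤ c * (c⁻¹ * suppF S (c • x)) :=
            mul_le_mul_of_nonneg_left h1 hc.le
        _ = suppF S (c • x) := by field_simp

end suppF

/-! ### The dual norm -/

/-- The polar (dual) function. -/
noncomputable def dualN (n : EuclideanSpace ℝ (Fin N) → ℝ) :
    EuclideanSpace ℝ (Fin N) → ℝ :=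
  suppF {w | n w ≤ 1}

namespace NormLike

variable {n : EuclideanSpace ℝ (Fin N) → ℝ} (h : NormLike n)
include h

theorem ball_nonempty : {w | n w ≤ 1}.Nonempty := ⟨0, by simp [h.zero]⟩

theorem ball_bdd : ∃ R, ∀ w ∈ {w | n w ≤ 1}, ‖w‖ ≤ R := by
  obtain ⟨c, hc, hlow⟩ := h.lower
  refine ⟨c⁻¹, fun w hw => ?_⟩
  have h1 : c * ‖w‖ ≤ 1 := le_trans (hlow w) hw
  calc ‖w‖ = c⁻¹ * (c * ‖w‖) := by field_simp
    _ ≤ c⁻¹ * 1 := mul_le_mul_of_nonneg_left h1 (inv_nonneg.mpr hc.le)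
    _ = c⁻¹ := mul_one _

theorem dual_le {x : EuclideanSpace ℝ (Fin N)} {a : ℝ}
    (H : ∀ w, n w ≤ 1 → (inner ℝ w x : ℝ) ≤ a) : dualN n x ≤ a :=
  suppF_le h.ball_nonempty H

theorem le_dual {x w : EuclideanSpace ℝ (Fin N)} (hw : n w ≤ 1) :
    (inner ℝ w x : ℝ) ≤ dualN n x := by
  obtain ⟨R, hR⟩ := h.ball_bdd
  exact le_suppF hR hw

theorem dual_nonneg (x : EuclideanSpace ℝ (Fin N)) : 0 ≤ dualN n x := by
  simpa using h.le_dual (w := 0) (x := x) (by simp [h.zero])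

theorem fund (w x : EuclideanSpace ℝ (Fin N)) : (inner ℝ w x : ℝ) ≤ n w * dualN n x := by
  rcases eq_or_ne w 0 with rfl | hw
  · simp [h.zero]
  · have hnw : 0 < n w := h.pos w hw
    have hmem : n ((n w)⁻¹ • w) ≤ 1 := by
      rw [h.hom _ (inv_nonneg.mpr hnw.le), inv_mul_cancel₀ hnw.ne']
    have h1 := h.le_dual (x := x) hmem
    rw [real_inner_smul_left] at h1
    calc (inner ℝ w x : ℝ) = n w * ((n w)⁻¹ * (inner ℝ w x : ℝ)) := by field_simp
      _ ≤ n w * dualN n x := mul_le_mul_of_nonneg_left h1 hnw.le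

theorem dual_zero_pt : dualN n 0 = 0 :=
  le_antisymm (h.dual_le fun w _ => by simp) (h.dual_nonneg 0)

theorem dual_smul {c : ℝ} (hc : 0 ≤ c) (x : EuclideanSpace ℝ (Fin N)) :
    dualN n (c • x) = c * dualN n x := by
  obtain ⟨R, hR⟩ := h.ball_bdd
  exact suppF_smul h.ball_nonempty hR (by simp [h.zero]) hc x

theorem dual_even (x : EuclideanSpace ℝ (Fin N)) : dualN n (-x) = dualN n x := by
  have key : ∀ y : EuclideanSpace ℝ (Fin N), dualN n (-y) ≤ dualN n y := by
    intro y
    refine h.dual_le fun w hw => ?_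
    have h1 : (inner ℝ (-w) y : ℝ) ≤ dualN n y := h.le_dual (by simpa [h.even] using hw)
    simpa [inner_neg_left, inner_neg_right] using h1
  refine le_antisymm (key x) ?_
  simpa using key (-x)

theorem dual_add (x y : EuclideanSpace ℝ (Fin N)) :
    dualN n (x + y) ≤ dualN n x + dualN n y := by
  refine h.dual_le fun w hw => ?_
  rw [inner_add_right]
  exact add_le_add (h.le_dual hw) (h.le_dual hw)

theorem dual_pos (x : EuclideanSpace ℝ (Fin N)) (hx : x ≠ 0) : 0 < dualN n x := by
  have hnx : 0 < n x := h.pos x hx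
  have hmem : n ((n x)⁻¹ • x) ≤ 1 := by
    rw [h.hom _ (inv_nonneg.mpr hnx.le), inv_mul_cancel₀ hnx.ne']
  have h1 := h.le_dual (x := x) hmem
  rw [real_inner_smul_left, real_inner_self_eq_norm_sq] at h1
  have h2 : 0 < (n x)⁻¹ * ‖x‖ ^ 2 := by
    have : 0 < ‖x‖ := norm_pos_iff.mpr hx
    positivity
  linarith

theorem dual_normLike : NormLike (dualN n) :=
  ⟨convexOn_of_hom_subadd (fun c hc x => h.dual_smul hc x) h.dual_add,
   h.dual_even, fun c hc x => h.dual_smul hc x, fun x hx => h.dual_pos x hx⟩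

end NormLike

/-! ### Supporting linear functionals (Hahn–Banach) -/

theorem exists_support {f : EuclideanSpace ℝ (Fin N) → ℝ}
    (hnn : ∀ x, 0 ≤ f x)
    (hhom : ∀ c : ℝ, 0 ≤ c → ∀ x, f (c • x) = c * f x)
    (hsub : ∀ x y, f (x + y) ≤ f x + f y)
    (v : EuclideanSpace ℝ (Fin N)) :
    ∃ k : EuclideanSpace ℝ (Fin N),
      (∀ w, (inner ℝ k w : ℝ) ≤ f w) ∧ f v ≤ (inner ℝ k v : ℝ) := by
  have hf0 : f 0 = 0 := by simpa using hhom 0 le_rfl 0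
  rcases eq_or_ne v 0 with rfl | hv
  · exact ⟨0, fun w => by simpa using hnn w, by simp [hf0]⟩
  · set p : EuclideanSpace ℝ (Fin N) →ₗ.[ℝ] ℝ := LinearPMap.mkSpanSingleton v (f v) hv with hp
    have hdom : ∀ z : p.domain, ∃ c : ℝ, (z : EuclideanSpace ℝ (Fin N)) = c • v := by
      intro z
      obtain ⟨c, hc⟩ := Submodule.mem_span_singleton.1 z.2
      exact ⟨c, hc.symm⟩
    have hple : ∀ z : p.domain, p z ≤ f z := by
      intro z
      obtain ⟨c, hc⟩ := hdom z
      have hz : z = ⟨c • v, by rw [← hc]; exact z.2⟩ := Subtype.ext hc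
      rw [hz]
      have happ : p ⟨c • v, by rw [← hc]; exact z.2⟩ = c • f v := by
        exact LinearPMap.mkSpanSingleton'_apply _ _ _ c _
      rw [happ]
      rcases le_or_gt 0 c with hcpos | hcneg
      · rw [hhom c hcpos]; simp
      · have h1 : f (c • v) ≥ 0 := hnn _
        have h2 : c • f v ≤ 0 := by
          have := hnn v
          simpa [smul_eq_mul] using mul_nonpos_of_nonpos_of_nonneg hcneg.le this
        linarith
    obtain ⟨g, hg1, hg2⟩ := exists_extension_of_le_sublinear p f
      (fun c hc x => hhom c hc.le x) hsub hple
    set k := (InnerProductSpace.toDual ℝ (EuclideanSpace ℝ (Fin N))).symm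
      (LinearMap.toContinuousLinearMap g) with hk
    have hkw : ∀ w, (inner ℝ k w : ℝ) = g w := fun w =>
      InnerProductSpace.toDual_symm_apply
    refine ⟨k, fun w => by rw [hkw]; exact hg2 w, ?_⟩
    have hmem : v ∈ p.domain := Submodule.mem_span_singleton_self v
    have h3 : g v = p ⟨v, hmem⟩ := hg1 ⟨v, hmem⟩
    have h4 : p ⟨v, hmem⟩ = f v := LinearPMap.mkSpanSingleton_apply ℝ ℝ hv (f v)
    rw [hkw, h3, h4]

/-! ### Bipolar theorem -/

theorem NormLike.bipolar {n : EuclideanSpace ℝ (Fin N) → ℝ} (h : NormLike n)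
    (x : EuclideanSpace ℝ (Fin N)) : dualN (dualN n) x = n x := by
  have hd := h.dual_normLike
  refine le_antisymm ?_ ?_
  · refine hd.dual_le fun y hy => ?_
    calc (inner ℝ y x : ℝ) = (inner ℝ x y : ℝ) := real_inner_comm x y
      _ ≤ n x * dualN n y := h.fund x y
      _ ≤ n x * 1 := mul_le_mul_of_nonneg_left hy (h.nonneg x)
      _ = n x := mul_one _
  · obtain ⟨k, hk1, hk2⟩ := exists_support h.nonneg h.hom h.subadd x
    have hkd : dualN n k ≤ 1 := by
      refine h.dual_le fun w hw => ?_
      calc (inner ℝ w k : ℝ) = (inner ℝ k w : ℝ) := real_inner_comm k w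
        _ ≤ n w := hk1 w
        _ ≤ 1 := hw
    calc n x ≤ (inner ℝ k x : ℝ) := hk2
      _ ≤ dualN (dualN n) x := hd.le_dual hkd

/-! ### Frontier of Wulff shapes -/

theorem NormLike.frontier_ball {m : EuclideanSpace ℝ (Fin N) → ℝ} (hm : NormLike m)
    {r : ℝ} (hr : 0 < r) (y₀ : EuclideanSpace ℝ (Fin N)) :
    frontier {z | m (z - y₀) ≤ r} = {z | m (z - y₀) = r} := by
  have hg : Continuous fun z : EuclideanSpace ℝ (Fin N) => m (z - y₀) :=
    hm.cont.comp (continuous_id.sub continuous_const)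
  have hclosed : IsClosed {z | m (z - y₀) ≤ r} := isClosed_le hg continuous_const
  have hopen : IsOpen {z | m (z - y₀) < r} := isOpen_lt hg continuous_const
  have hint : interior {z | m (z - y₀) ≤ r} = {z | m (z - y₀) < r} := by
    refine subset_antisymm ?_ ?_
    · intro z hz
      have hzle : m (z - y₀) ≤ r :=
        interior_subset (s := {z | m (z - y₀) ≤ r}) hz
      rcases lt_or_eq_of_le hzle with hlt | heq
      · exact hlt
      · exfalso
        obtain ⟨δ, hδ, hball⟩ := Metric.isOpen_iff.1 isOpen_interior z hz
        have hzy : z - y₀ ≠ 0 := by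
          intro h0
          rw [h0, hm.zero] at heq
          exact hr.ne heq
        have hnorm : 0 < ‖z - y₀‖ := norm_pos_iff.mpr hzy
        set t : ℝ := δ / (2 * ‖z - y₀‖) with ht
        have htpos : 0 < t := by positivity
        set z' := z + t • (z - y₀) with hz'
        have hdist : dist z' z < δ := by
          rw [dist_eq_norm]
          have : z' - z = t • (z - y₀) := by rw [hz']; abel
          rw [this, norm_smul, Real.norm_eq_abs, abs_of_pos htpos, ht]
          rw [div_mul_eq_mul_div, mul_comm (2:ℝ) ‖z - y₀‖, ← div_div,
            mul_div_assoc, div_self hnorm.ne', mul_one]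
          linarith
        have hz'mem : z' ∈ {z | m (z - y₀) ≤ r} :=
          interior_subset (s := {z | m (z - y₀) ≤ r}) (hball hdist)
        have hz'val : m (z' - y₀) = (1 + t) * r := by
          have heq2 : z' - y₀ = (1 + t) • (z - y₀) := by
            rw [hz', add_smul, one_smul]; abel
          rw [heq2, hm.hom _ (by linarith), heq]
        have : (1 + t) * r ≤ r := by rw [← hz'val]; exact hz'mem
        nlinarith
    · exact (IsOpen.subset_interior_iff hopen).2 fun z hz => (le_of_lt hz : m (z - y₀) ≤ r)
  rw [frontier, hclosed.closure_eq, hint]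
  ext z
  simp only [mem_diff, mem_setOf_eq]
  constructor
  · rintro ⟨h1, h2⟩; exact le_antisymm h1 (not_lt.1 h2)
  · rintro h1; exact ⟨le_of_eq h1, by rw [h1]; exact lt_irrefl r⟩

end PhiReg
open scoped Pointwise in
/-- `ψ` is `φ`-regular with parameter `ε₀ > 0` (every boundary point of the
unit Wulff shape of `ψ` is touched from inside by a translate of `ε₀`-Wulff shape
of `φ`) if and only if `ψ = ψ₀ + ε₀ φ` for some nonnegative convex
one-homogeneous function `ψ₀`. -/
theorem phi_regular_iff_decomposition {N : ℕ}
    (ψ φ : EuclideanSpace ℝ (Fin N) → ℝ)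
    (hψconv : ConvexOn ℝ Set.univ ψ)
    (hψeven : ∀ x, ψ (-x) = ψ x)
    (hψhom : ∀ (c : ℝ), 0 ≤ c → ∀ x, ψ (c • x) = c * ψ x)
    (hψpos : ∀ x, x ≠ 0 → 0 < ψ x)
    (hφconv : ConvexOn ℝ Set.univ φ)
    (hφeven : ∀ x, φ (-x) = φ x)
    (hφhom : ∀ (c : ℝ), 0 ≤ c → ∀ x, φ (c • x) = c * φ x)
    (hφpos : ∀ x, x ≠ 0 → 0 < φ x)
    (ψp φp : EuclideanSpace ℝ (Fin N) → ℝ)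
    (hψp : ∀ ξ, ψp ξ = sSup ((fun w => (inner ℝ w ξ : ℝ)) '' {w | ψ w ≤ 1}))
    (hφp : ∀ ξ, φp ξ = sSup ((fun w => (inner ℝ w ξ : ℝ)) '' {w | φ w ≤ 1}))
    (ε₀ : ℝ) (hε₀ : 0 < ε₀) :
    (∀ x ∈ frontier {y | ψp y ≤ 1}, ∃ y₀ : EuclideanSpace ℝ (Fin N),
        {z | φp (z - y₀) ≤ ε₀} ⊆ {y | ψp y ≤ 1} ∧ x ∈ frontier {z | φp (z - y₀) ≤ ε₀})
    ↔ ∃ ψ₀ : EuclideanSpace ℝ (Fin N) → ℝ,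
        (∀ x, 0 ≤ ψ₀ x) ∧ ConvexOn ℝ Set.univ ψ₀ ∧
        (∀ (c : ℝ), 0 ≤ c → ∀ x, ψ₀ (c • x) = c * ψ₀ x) ∧
        (∀ x, ψ x = ψ₀ x + ε₀ * φ x) := by
  classical
  have hψn : PhiReg.NormLike ψ := ⟨hψconv, hψeven, hψhom, hψpos⟩
  have hφn : PhiReg.NormLike φ := ⟨hφconv, hφeven, hφhom, hφpos⟩
  have hψpe : ψp = PhiReg.dualN ψ := funext hψp
  have hφpe : φp = PhiReg.dualN φ := funext hφp
  subst hψpe hφpe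
  have hdψ := hψn.dual_normLike
  have hdφ := hφn.dual_normLike
  have hfrψ : frontier {y | PhiReg.dualN ψ y ≤ 1} = {y | PhiReg.dualN ψ y = 1} := by
    have h0 := hdψ.frontier_ball one_pos (0 : EuclideanSpace ℝ (Fin N))
    simpa only [sub_zero] using h0
  -- the approximate maximizer over the `ε₀`-ball of the dual of `φ`
  have happroxφ : ∀ (x : EuclideanSpace ℝ (Fin N)) (δ : ℝ), 0 < δ →
      ∃ z, PhiReg.dualN φ z ≤ ε₀ ∧ ε₀ * φ x - δ < (inner ℝ z x : ℝ) := by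
    intro x δ hδ
    have hlt : φ x - δ / ε₀ < PhiReg.dualN (PhiReg.dualN φ) x := by
      rw [hφn.bipolar x]
      have : 0 < δ / ε₀ := by positivity
      linarith
    have hlt' : φ x - δ / ε₀ <
        sSup ((fun w => (inner ℝ w x : ℝ)) '' {w | PhiReg.dualN φ w ≤ 1}) := hlt
    obtain ⟨b, hb, hlt2⟩ := exists_lt_of_lt_csSup ((hdφ.ball_nonempty).image _) hlt'
    obtain ⟨y, hy, rfl⟩ := hb
    refine ⟨ε₀ • y, ?_, ?_⟩
    · rw [hφn.dual_smul hε₀.le]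
      calc ε₀ * PhiReg.dualN φ y ≤ ε₀ * 1 := mul_le_mul_of_nonneg_left hy hε₀.le
        _ = ε₀ := mul_one _
    · rw [real_inner_smul_left]
      have := mul_lt_mul_of_pos_left hlt2 hε₀
      rw [mul_sub, mul_div_cancel₀ _ hε₀.ne'] at this
      linarith
  constructor
  · -- regularity implies decomposition
    intro hA
    rcases isEmpty_or_nonempty (Fin N) with hN | hN
    · refine ⟨fun _ => 0, fun _ => le_rfl, convexOn_const 0 convex_univ,
        fun c hc x => by simp, fun x => ?_⟩
      have hx : x = 0 := PiLp.ext fun i => isEmptyElim i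
      simp [hx, hψn.zero, hφn.zero]
    · set K := {k : EuclideanSpace ℝ (Fin N) |
        ∀ z, PhiReg.dualN φ z ≤ ε₀ → PhiReg.dualN ψ (k + z) ≤ 1} with hKdef
      have hKmem : ∀ y₀, ({z | PhiReg.dualN φ (z - y₀) ≤ ε₀} ⊆
          {y | PhiReg.dualN ψ y ≤ 1}) → y₀ ∈ K := by
        intro y₀ hsub z hz
        refine hsub (show PhiReg.dualN φ ((y₀ + z) - y₀) ≤ ε₀ by
          simpa [add_sub_cancel_left] using hz)
      obtain ⟨i⟩ := hN
      have hune : (EuclideanSpace.single i (1:ℝ)) ≠ 0 := by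
        intro h0
        have := congrArg norm h0
        rw [EuclideanSpace.norm_single] at this
        simp at this
      have hKne : K.Nonempty := by
        set u := EuclideanSpace.single i (1:ℝ) with hu
        have ht : 0 < PhiReg.dualN ψ u := hdψ.pos u hune
        have hx1 : PhiReg.dualN ψ ((PhiReg.dualN ψ u)⁻¹ • u) = 1 := by
          rw [hψn.dual_smul (inv_nonneg.mpr ht.le), inv_mul_cancel₀ ht.ne']
        have hxfr : ((PhiReg.dualN ψ u)⁻¹ • u) ∈ frontier {y | PhiReg.dualN ψ y ≤ 1} := by
          rw [hfrψ]; exact hx1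
        obtain ⟨y₀, hsub, _⟩ := hA _ hxfr
        exact ⟨y₀, hKmem y₀ hsub⟩
      have hKsymm : ∀ k ∈ K, -k ∈ K := by
        intro k hk z hz
        have h1 := hk (-z) (by rwa [hφn.dual_even])
        have h2 : -k + z = -(k + -z) := by abel
        rw [h2, hψn.dual_even]
        exact h1
      have hKconv : ∀ k₁ ∈ K, ∀ k₂ ∈ K, ∀ a b : ℝ, 0 ≤ a → 0 ≤ b → a + b = 1 →
          a • k₁ + b • k₂ ∈ K := by
        intro k₁ h₁ k₂ h₂ a b ha hb hab z hz
        have hz' : a • z + b • z = z := by rw [← add_smul, hab, one_smul]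
        have heq : a • (k₁ + z) + b • (k₂ + z) = a • k₁ + b • k₂ + z := by
          rw [smul_add, smul_add]
          conv_rhs => rw [← hz']
          abel
        show PhiReg.dualN ψ (a • k₁ + b • k₂ + z) ≤ 1
        rw [← heq]
        calc PhiReg.dualN ψ (a • (k₁ + z) + b • (k₂ + z))
            ≤ PhiReg.dualN ψ (a • (k₁ + z)) + PhiReg.dualN ψ (b • (k₂ + z)) :=
              hψn.dual_add _ _
          _ = a * PhiReg.dualN ψ (k₁ + z) + b * PhiReg.dualN ψ (k₂ + z) := by
              rw [hψn.dual_smul ha, hψn.dual_smul hb]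
          _ ≤ a * 1 + b * 1 := add_le_add
              (mul_le_mul_of_nonneg_left (h₁ z hz) ha)
              (mul_le_mul_of_nonneg_left (h₂ z hz) hb)
          _ = 1 := by rw [mul_one, mul_one, hab]
      obtain ⟨k₀, hk₀⟩ := hKne
      have hK0 : (0 : EuclideanSpace ℝ (Fin N)) ∈ K := by
        have h1 := hKconv k₀ hk₀ (-k₀) (hKsymm k₀ hk₀) (1/2) (1/2)
          (by norm_num) (by norm_num) (by norm_num)
        have heq0 : (1/2 : ℝ) • k₀ + (1/2 : ℝ) • (-k₀) = 0 := by
          rw [smul_neg]; exact add_neg_cancel _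
        rwa [heq0] at h1
      obtain ⟨c, hc, hlow⟩ := hdψ.lower
      have hKbdd : ∀ k ∈ K, ‖k‖ ≤ c⁻¹ := by
        intro k hk
        have h1 : PhiReg.dualN ψ k ≤ 1 := by
          have := hk 0 (by rw [hφn.dual_zero_pt]; exact hε₀.le)
          simpa using this
        have h2 : c * ‖k‖ ≤ 1 := le_trans (hlow k) h1
        calc ‖k‖ = c⁻¹ * (c * ‖k‖) := by field_simp
          _ ≤ c⁻¹ * 1 := mul_le_mul_of_nonneg_left h2 (inv_nonneg.mpr hc.le)
          _ = c⁻¹ := mul_one _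
      have hKne' : K.Nonempty := ⟨k₀, hk₀⟩
      refine ⟨PhiReg.suppF K, fun x => PhiReg.suppF_nonneg hKbdd hK0 x,
        PhiReg.convexOn_of_hom_subadd
          (fun c' hc' x => PhiReg.suppF_smul hKne' hKbdd hK0 hc' x)
          (fun x y => PhiReg.suppF_add hKne' hKbdd x y),
        fun c' hc' x => PhiReg.suppF_smul hKne' hKbdd hK0 hc' x, fun x => ?_⟩
      have hbipψ := hψn.bipolar x
      refine le_antisymm ?_ ?_
      · rw [← hbipψ]
        refine hdψ.dual_le fun y hy => ?_
        have hRHS : 0 ≤ PhiReg.suppF K x + ε₀ * φ x :=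
          add_nonneg (PhiReg.suppF_nonneg hKbdd hK0 x)
            (mul_nonneg hε₀.le (hφn.nonneg x))
        rcases le_or_gt (inner ℝ y x : ℝ) 0 with hyx | hyx
        · linarith
        · have hyne : y ≠ 0 := by rintro rfl; simp at hyx
          have htpos : 0 < PhiReg.dualN ψ y := hdψ.pos y hyne
          set t := PhiReg.dualN ψ y with htdef
          set y' := t⁻¹ • y with hy'def
          have hy'1 : PhiReg.dualN ψ y' = 1 := by
            rw [hy'def, hψn.dual_smul (inv_nonneg.mpr htpos.le), ← htdef,
              inv_mul_cancel₀ htpos.ne']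
          have hy'fr : y' ∈ frontier {y | PhiReg.dualN ψ y ≤ 1} := by
            rw [hfrψ]; exact hy'1
          obtain ⟨y₀, hsub, hfr⟩ := hA y' hy'fr
          have hy₀K : y₀ ∈ K := hKmem y₀ hsub
          have hfr' : PhiReg.dualN φ (y' - y₀) = ε₀ := by
            rw [hdφ.frontier_ball hε₀ y₀] at hfr
            exact hfr
          have hterm1 : (inner ℝ y₀ x : ℝ) ≤ PhiReg.suppF K x :=
            PhiReg.le_suppF hKbdd hy₀K
          have hterm2 : (inner ℝ (y' - y₀) x : ℝ) ≤ ε₀ * φ x := by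
            calc (inner ℝ (y' - y₀) x : ℝ)
                ≤ PhiReg.dualN φ (y' - y₀) * PhiReg.dualN (PhiReg.dualN φ) x :=
                  hdφ.fund _ x
              _ = ε₀ * φ x := by rw [hfr', hφn.bipolar x]
          have hy'le : (inner ℝ y' x : ℝ) ≤ PhiReg.suppF K x + ε₀ * φ x := by
            have hv : y₀ + (y' - y₀) = y' := by abel
            have h3 : (inner ℝ y' x : ℝ) = (inner ℝ y₀ x : ℝ) + (inner ℝ (y' - y₀) x : ℝ) := by
              rw [← hv, inner_add_left]
              norm_num
            linarith
          have hy'pos : 0 < (inner ℝ y' x : ℝ) := by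
            rw [hy'def, real_inner_smul_left]
            positivity
          have hyy' : (inner ℝ y x : ℝ) = t * (inner ℝ y' x : ℝ) := by
            rw [hy'def, real_inner_smul_left, ← mul_assoc,
              mul_inv_cancel₀ htpos.ne', one_mul]
          rw [hyy']
          calc t * (inner ℝ y' x : ℝ) ≤ 1 * (inner ℝ y' x : ℝ) :=
                mul_le_mul_of_nonneg_right hy hy'pos.le
            _ = (inner ℝ y' x : ℝ) := one_mul _
            _ ≤ PhiReg.suppF K x + ε₀ * φ x := hy'le
      · have hk_le : ∀ k ∈ K, (inner ℝ k x : ℝ) ≤ ψ x - ε₀ * φ x := by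
          intro k hk
          by_contra hcon
          push_neg at hcon
          obtain ⟨z, hz1, hz2⟩ := happroxφ x ((inner ℝ k x : ℝ) - (ψ x - ε₀ * φ x))
            (by linarith)
          have hmem : PhiReg.dualN ψ (k + z) ≤ 1 := hk z hz1
          have h3 : (inner ℝ (k + z) x : ℝ) ≤ ψ x := by
            rw [← hbipψ]
            exact hdψ.le_dual hmem
          rw [inner_add_left] at h3
          have h4 : (inner ℝ k x : ℝ) + (inner ℝ z x : ℝ) ≤ ψ x := by
            exact_mod_cast h3
          linarith
        have h4 : PhiReg.suppF K x ≤ ψ x - ε₀ * φ x := PhiReg.suppF_le hKne' hk_le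
        linarith
  · -- decomposition implies regularity
    rintro ⟨ψ₀, hψ₀nn, hψ₀conv, hψ₀hom, hψ₀eq⟩ x hx
    have hψ₀sub := PhiReg.subadd_of_convexOn_hom hψ₀conv hψ₀hom
    set K' := {k : EuclideanSpace ℝ (Fin N) | ∀ w, (inner ℝ k w : ℝ) ≤ ψ₀ w} with hK'def
    have h0K' : (0 : EuclideanSpace ℝ (Fin N)) ∈ K' := fun w => by simpa using hψ₀nn w
    have hsubball : ∀ k ∈ K', {z | PhiReg.dualN φ (z - k) ≤ ε₀} ⊆
        {y | PhiReg.dualN ψ y ≤ 1} := by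
      intro k hk y hy
      show PhiReg.dualN ψ y ≤ 1
      refine hψn.dual_le fun w hw => ?_
      have h1 : (inner ℝ w k : ℝ) ≤ ψ₀ w := by rw [real_inner_comm]; exact hk w
      have h2' : (inner ℝ w (y - k) : ℝ) ≤ ε₀ * φ w := by
        calc (inner ℝ w (y - k) : ℝ) ≤ φ w * PhiReg.dualN φ (y - k) := hφn.fund w (y - k)
          _ ≤ φ w * ε₀ := mul_le_mul_of_nonneg_left hy (hφn.nonneg w)
          _ = ε₀ * φ w := mul_comm _ _
      have hv : k + (y - k) = y := by abel
      have h3 : (inner ℝ w y : ℝ) = (inner ℝ w k : ℝ) + (inner ℝ w (y - k) : ℝ) := by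
        rw [← hv, inner_add_right]
        norm_num
      rw [h3]
      calc (inner ℝ w k : ℝ) + (inner ℝ w (y - k) : ℝ) ≤ ψ₀ w + ε₀ * φ w := add_le_add h1 h2'
        _ = ψ w := (hψ₀eq w).symm
        _ ≤ 1 := hw
    have hx1 : PhiReg.dualN ψ x = 1 := by rw [hfrψ] at hx; exact hx
    set Bε := {z : EuclideanSpace ℝ (Fin N) | PhiReg.dualN φ z ≤ ε₀} with hBdef
    have hBcomp : IsCompact Bε := hdφ.isCompact_ball ε₀
    have hBconv : Convex ℝ Bε := hdφ.convex_ball ε₀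
    have hK'closed : IsClosed K' := by
      have hKeq : K' = ⋂ w, {k : EuclideanSpace ℝ (Fin N) | (inner ℝ k w : ℝ) ≤ ψ₀ w} := by
        ext k
        simp [hK'def, Set.mem_iInter]
      rw [hKeq]
      exact isClosed_iInter fun w =>
        isClosed_le (continuous_id.inner continuous_const) continuous_const
    have hK'conv : Convex ℝ K' := by
      intro k₁ h₁ k₂ h₂ a b ha hb hab
      intro w
      have e1 : (inner ℝ (a • k₁ + b • k₂) w : ℝ)
          = a * (inner ℝ k₁ w : ℝ) + b * (inner ℝ k₂ w : ℝ) := by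
        rw [inner_add_left, real_inner_smul_left, real_inner_smul_left]
      show (inner ℝ (a • k₁ + b • k₂) w : ℝ) ≤ ψ₀ w
      rw [e1]
      calc a * (inner ℝ k₁ w : ℝ) + b * (inner ℝ k₂ w : ℝ)
          ≤ a * ψ₀ w + b * ψ₀ w := add_le_add
            (mul_le_mul_of_nonneg_left (h₁ w) ha)
            (mul_le_mul_of_nonneg_left (h₂ w) hb)
        _ = ψ₀ w := by rw [← add_mul, hab, one_mul]
    have hMclosed : IsClosed (Bε + K') := hK'closed.add_left_of_isCompact hBcomp
    have hMconv : Convex ℝ (Bε + K') := hBconv.add hK'conv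
    have hxM : x ∈ Bε + K' := by
      by_contra hxM
      obtain ⟨f, u, hfu, hux⟩ := geometric_hahn_banach_closed_point hMconv hMclosed hxM
      set v := (InnerProductSpace.toDual ℝ (EuclideanSpace ℝ (Fin N))).symm f with hvdef
      have hv : ∀ z, (inner ℝ v z : ℝ) = f z := fun z => InnerProductSpace.toDual_symm_apply
      obtain ⟨kk, hkk1, hkk2⟩ := PhiReg.exists_support hψ₀nn hψ₀hom hψ₀sub v
      have hkkK : kk ∈ K' := hkk1
      have hψvu : ψ v ≤ u := by
        by_contra hcon
        push_neg at hcon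
        obtain ⟨z, hz1, hz2⟩ := happroxφ v (ψ v - u) (by linarith)
        have hmemM : z + kk ∈ Bε + K' := Set.add_mem_add hz1 hkkK
        have h5 : f (z + kk) < u := hfu _ hmemM
        rw [← hv, inner_add_right] at h5
        have h6 : ψ₀ v ≤ (inner ℝ v kk : ℝ) := by
          rw [real_inner_comm]; exact hkk2
        have h7 : ε₀ * φ v - (ψ v - u) < (inner ℝ v z : ℝ) := by
          rw [real_inner_comm]; exact hz2
        have h8 := hψ₀eq v
        have h5' : (inner ℝ v z : ℝ) + (inner ℝ v kk : ℝ) < u := by exact_mod_cast h5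
        linarith
      have h9 : (inner ℝ v x : ℝ) ≤ ψ v := by
        calc (inner ℝ v x : ℝ) ≤ ψ v * PhiReg.dualN ψ x := hψn.fund v x
          _ = ψ v := by rw [hx1, mul_one]
      rw [hv] at h9
      linarith
    obtain ⟨z, hz, k, hk, hzk⟩ := Set.mem_add.1 hxM
    refine ⟨k, hsubball k hk, ?_⟩
    rw [hdφ.frontier_ball hε₀ k]
    show PhiReg.dualN φ (x - k) = ε₀
    have hxk : x - k = z := by rw [← hzk]; abel
    rw [hxk]
    have hzten : PhiReg.dualN φ z ≤ ε₀ := hz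
    rcases lt_or_eq_of_le hzten with hlt | heq
    · exfalso
      have hopen : IsOpen {y : EuclideanSpace ℝ (Fin N) | PhiReg.dualN φ (y - k) < ε₀} :=
        isOpen_lt (hdφ.cont.comp (continuous_id.sub continuous_const)) continuous_const
      have hxmem : x ∈ {y : EuclideanSpace ℝ (Fin N) | PhiReg.dualN φ (y - k) < ε₀} := by
        show PhiReg.dualN φ (x - k) < ε₀
        rw [hxk]; exact hlt
      have hsub2 : {y : EuclideanSpace ℝ (Fin N) | PhiReg.dualN φ (y - k) < ε₀} ⊆
          {y | PhiReg.dualN ψ y ≤ 1} :=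
        fun y hy => hsubball k hk
          (show PhiReg.dualN φ (y - k) ≤ ε₀ from le_of_lt hy)
      have hxint : x ∈ interior {y | PhiReg.dualN ψ y ≤ 1} :=
        interior_maximal hsub2 hopen hxmem
      exact hx.2 hxint
    · exact heq
end

section
/- Let u : ℝ^N × [0,∞) → ℝ be continuous and, for each (x,t), suppose λ ↦ dist((x,t), {u ≤ λ}) is non-increasing in λ (here dist is Euclidean distance in ℝ^{N+1} to the closed sublevel set K_λ := {(x,t) : u(x,t) ≤ λ}). Then there is a countable set N₁ ⊂ ℝ such that for every λ₀ ∉ N₁ and every point p ∈ ℝ^N × [0,∞), the map λ ↦ dist(p, K_λ) is continuous at λ₀. -/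
/-!
Each `λ ↦ dist(p, K λ)` is monotone, so it has countably many discontinuities; taking the union
over a countable dense set of points `p` gives a countable set of levels. Off that set the
function is continuous for every `p`, because `p ↦ dist(p, K ·)` is `1`-Lipschitz into the
space of functions with the uniform distance, and continuity at a fixed level is preserved under
uniform limits.
-/

open Set Filter UniformFun
open scoped UniformConvergence

protected theorem TendstoUniformly.continuousAt {ι α β : Type*} [TopologicalSpace α]
    [UniformSpace β] {F : ι → α → β} {f : α → β} {p : Filter ι} {x : α}
    (h : TendstoUniformly F f p) (hc : ∃ᶠ n in p, ContinuousAt (F n) x) : ContinuousAt f x :=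
  continuousAt_of_locally_uniform_approx_of_continuousAt fun u hu =>
    let ⟨n, hFc, hF⟩ := (hc.and_eventually (h u hu)).exists
    ⟨univ, univ_mem, F n, hFc, fun y _ => hF y⟩

theorem UniformFun.isClosed_setOf_continuousAt {α β : Type*} [TopologicalSpace α]
    [UniformSpace β] (x : α) : IsClosed {f : α →ᵤ β | ContinuousAt (toFun f) x} := by
  refine isClosed_iff_forall_filter.2 fun f l _ hl hlf => ?_
  rw [← tendsto_id', UniformFun.tendsto_iff_tendstoUniformly] at hlf
  exact hlf.continuousAt (Eventually.frequently (le_principal_iff.mp hl))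

section ParametrizedFamily

variable {X β : Type*} [TopologicalSpace X] {F : X → β → ℝ}

theorem Equicontinuous.continuousAt_of_dense [TopologicalSpace β]
    (hF : Equicontinuous fun c x => F x c) {D : Set X} (hD : Dense D) {c : β}
    (hDc : ∀ q ∈ D, ContinuousAt (F q) c) (p : X) : ContinuousAt (F p) c := by
  have hclosed : IsClosed {x | ContinuousAt (F x) c} :=
    (isClosed_setOf_continuousAt c).preimage (equicontinuous_iff_continuous.mp hF)
  exact hclosed.closure_subset_iff.mpr hDc (hD.closure_eq ▸ mem_univ p)

theorem exists_countable_forall_continuousAt_of_antitone [TopologicalSpace.SeparableSpace X]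
    [LinearOrder β] [TopologicalSpace β] [OrderTopology β] [SecondCountableTopology β]
    (hmono : ∀ x, Antitone (F x)) (hF : Equicontinuous fun c x => F x c) :
    ∃ S : Set β, S.Countable ∧ ∀ c ∉ S, ∀ x, ContinuousAt (F x) c := by
  obtain ⟨D, hDcount, hD⟩ := TopologicalSpace.exists_countable_dense X
  refine ⟨⋃ q ∈ D, {c | ¬ContinuousAt (F q) c},
    hDcount.biUnion fun q _ => (hmono q).countable_not_continuousAt, fun c hc => ?_⟩
  refine hF.continuousAt_of_dense hD fun q hq => ?_
  by_contra hdisc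
  exact hc (mem_biUnion hq hdisc)

end ParametrizedFamily

theorem countable_exceptional_levels_general {N : ℕ}
    (K : ℝ → Set (EuclideanSpace ℝ (Fin N) × ℝ))
    (hmono : ∀ p, Antitone (fun lam => Metric.infDist p (K lam))) :
    ∃ S : Set ℝ, S.Countable ∧ ∀ lam₀ ∉ S,
      ∀ p : EuclideanSpace ℝ (Fin N) × ℝ,
        ContinuousAt (fun lam => Metric.infDist p (K lam)) lam₀ :=
  exists_countable_forall_continuousAt_of_antitone hmono
    (LipschitzWith.uniformEquicontinuous _ 1 fun lam =>
      Metric.lipschitz_infDist_pt (K lam)).equicontinuous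

/-- For a continuous function `u` on `ℝ^N × [0,∞)` with closed sublevel sets
`K λ`, if `λ ↦ dist(p, K λ)` is non-increasing for each point `p`, then there is
a countable set `N₁ ⊆ ℝ` outside of which `λ ↦ dist(p, K λ)` is continuous at
`λ₀` simultaneously for all points `p`. -/
theorem countable_exceptional_levels {N : ℕ}
    (u : EuclideanSpace ℝ (Fin N) × ℝ → ℝ) (hu : Continuous u)
    (K : ℝ → Set (EuclideanSpace ℝ (Fin N) × ℝ))
    (hK : ∀ lam, K lam = {p | 0 ≤ p.2 ∧ u p ≤ lam})
    (hmono : ∀ p, Antitone (fun lam => Metric.infDist p (K lam))) :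
    ∃ S : Set ℝ, S.Countable ∧ ∀ lam₀ ∉ S,
      ∀ p : EuclideanSpace ℝ (Fin N) × ℝ,
        ContinuousAt (fun lam => Metric.infDist p (K lam)) lam₀ :=
  countable_exceptional_levels_general K hmono
end
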